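/- arXiv:1509.08262 — 7 statements merged into one kernel-verified Lean document; each statement's English description precedes it below -/
import Mathlib

section
/- Let P > 0, N₀ > 0, η ∈ (0,1], β ∈ (0,1), and δ > 1. Define ν(x) = (1−β)·( ηβPx/(N₀(ηβx + (1−β))) − Pδ/(P(1−β)x + N₀) ) for x ≥ 0, and θ₁ = [ (δ−1)/(1−β) + √( ((δ−1)/(1−β))² + 4δP/(ηβN₀) ) ] / (2P/N₀). Then θ₁ > 0, ν(θ₁) = 0, ν(x) < 0 for all 0 ≤ x < θ₁, and ν(x) ≥ 0 for all x ≥ θ₁. -/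
open Real

/-!
Clearing denominators, `ν x` is a positive multiple of the quadratic
`q x = ηβ(1-β)P x² - ηβN₀(δ-1) x - δN₀(1-β)` for `x ≥ 0`. Since `q` has positive leading
coefficient and `q 0 < 0`, its roots have opposite signs, and `θ₁` is the positive one; so on
`[0, ∞)` the sign of `ν x` is that of `x - θ₁`.
-/

/-- The cofactor's constant term is `c / r` because the product of the roots is `-c / a`. -/
lemma quadratic_eq_sub_root_mul {a b c r : ℝ} (hr : r ≠ 0) (hroot : a * r ^ 2 - b * r - c = 0)
    (x : ℝ) : a * x ^ 2 - b * x - c = (x - r) * (a * x + c / r) := by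
  field_simp
  linear_combination x * hroot

lemma quadratic_neg_iff_lt_root {a b c r x : ℝ} (ha : 0 ≤ a) (hc : 0 < c) (hr : 0 < r)
    (hroot : a * r ^ 2 - b * r - c = 0) (hx : 0 ≤ x) : a * x ^ 2 - b * x - c < 0 ↔ x < r := by
  have hcofactor : 0 < a * x + c / r := by positivity
  rw [quadratic_eq_sub_root_mul hr.ne' hroot, mul_neg_iff]
  constructor
  · rintro (⟨-, hneg⟩ | ⟨hlt, -⟩)
    · exact absurd hneg hcofactor.not_gt
    · linarith
  · intro hlt
    exact Or.inr ⟨by linarith, hcofactor⟩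

lemma add_sqrt_sq_add_isRoot (k m : ℝ) (hkm : 0 ≤ k ^ 2 + m) :
    (k + √(k ^ 2 + m)) ^ 2 - 2 * k * (k + √(k ^ 2 + m)) - m = 0 := by
  linear_combination sq_sqrt hkm

section PowerSplitting

variable {P N0 η β δ : ℝ}

lemma ps_nu_eq_mul_quadratic (hP : 0 < P) (hN0 : 0 < N0) (hη0 : 0 < η) (hβ0 : 0 < β)
    (hβ1 : β < 1) {x : ℝ} (hx : 0 ≤ x) :
    ∃ w > 0, (1 - β) * (η * β * P * x / (N0 * (η * β * x + (1 - β)))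
        - P * δ / (P * (1 - β) * x + N0)) =
      w * (η * β * (1 - β) * P * x ^ 2 - η * β * N0 * (δ - 1) * x - δ * N0 * (1 - β)) := by
  have hβ' : 0 < 1 - β := by linarith
  have hD₁ : 0 < η * β * x + (1 - β) := by positivity
  have hD₂ : 0 < P * (1 - β) * x + N0 := by positivity
  refine ⟨(1 - β) * P / (N0 * (η * β * x + (1 - β)) * (P * (1 - β) * x + N0)),
    by positivity, ?_⟩
  field_simp
  ring

lemma ps_quadratic_eq_zero_of_rescaled_root (hP : P ≠ 0) (hN0 : N0 ≠ 0) (hη : η ≠ 0)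
    (hβ0 : β ≠ 0) (hβ1 : β ≠ 1) {u : ℝ}
    (hu : u ^ 2 - 2 * ((δ - 1) / (1 - β)) * u - 4 * δ * P / (η * β * N0) = 0) :
    η * β * (1 - β) * P * (u / (2 * (P / N0))) ^ 2 - η * β * N0 * (δ - 1) * (u / (2 * (P / N0)))
      - δ * N0 * (1 - β) = 0 := by
  have hβ' : 1 - β ≠ 0 := sub_ne_zero.2 hβ1.symm
  field_simp at hu ⊢
  linear_combination N0 * hu

lemma ps_theta_pos_and_isRoot (hP : 0 < P) (hN0 : 0 < N0) (hη0 : 0 < η) (hβ0 : 0 < β)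
    (hβ1 : β < 1) (hδ : 1 < δ) :
    let θ := ((δ - 1) / (1 - β)
        + √(((δ - 1) / (1 - β)) ^ 2 + 4 * δ * P / (η * β * N0))) / (2 * (P / N0))
    0 < θ ∧ η * β * (1 - β) * P * θ ^ 2 - η * β * N0 * (δ - 1) * θ - δ * N0 * (1 - β) = 0 := by
  have hβ' : 0 < 1 - β := sub_pos.2 hβ1
  exact ⟨by positivity,
    ps_quadratic_eq_zero_of_rescaled_root hP.ne' hN0.ne' hη0.ne' hβ0.ne' hβ1.ne
      (add_sqrt_sq_add_isRoot _ _ (by positivity))⟩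

end PowerSplitting

theorem nu_sign_PS_general (P N0 η β δ : ℝ) (hP : 0 < P) (hN0 : 0 < N0)
    (hη0 : 0 < η) (hβ0 : 0 < β) (hβ1 : β < 1) (hδ : 1 < δ)
    (ν : ℝ → ℝ)
    (hν : ∀ x, ν x = (1 - β) * (η * β * P * x / (N0 * (η * β * x + (1 - β)))
        - P * δ / (P * (1 - β) * x + N0)))
    (θ1 : ℝ)
    (hθ1 : θ1 = ((δ - 1) / (1 - β)
        + Real.sqrt (((δ - 1) / (1 - β)) ^ 2 + 4 * δ * P / (η * β * N0))) / (2 * (P / N0))) :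
    0 < θ1 ∧ ν θ1 = 0 ∧ (∀ x, 0 ≤ x → x < θ1 → ν x < 0) ∧ (∀ x, θ1 ≤ x → 0 ≤ ν x) := by
  obtain ⟨hθ_pos, hθ_root⟩ := hθ1 ▸ ps_theta_pos_and_isRoot hP hN0 hη0 hβ0 hβ1 hδ
  have hβ' : 0 < 1 - β := by linarith
  have hnonneg_iff : ∀ x, 0 ≤ x → (0 ≤ ν x ↔ θ1 ≤ x) := by
    intro x hx
    obtain ⟨w, hw, hνx⟩ := ps_nu_eq_mul_quadratic (δ := δ) hP hN0 hη0 hβ0 hβ1 hx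
    rw [hν, hνx, mul_nonneg_iff_of_pos_left hw, ← not_lt, ← not_lt,
      quadratic_neg_iff_lt_root (by positivity) (by positivity) hθ_pos hθ_root hx]
  refine ⟨hθ_pos, ?_, fun x hx hlt ↦ ?_, fun x hle ↦ (hnonneg_iff x (hθ_pos.le.trans hle)).2 hle⟩
  · obtain ⟨w, -, hνθ⟩ := ps_nu_eq_mul_quadratic (δ := δ) hP hN0 hη0 hβ0 hβ1 hθ_pos.le
    rw [hν, hνθ, hθ_root, mul_zero]
  · exact lt_of_not_ge fun h ↦ hlt.not_ge ((hnonneg_iff x hx).1 h)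

/-- **Sign pattern of `ν` for the PS policy.** With `ν(x) = (1-β)(ηβPx/(N₀(ηβx+(1-β))) -
Pδ/(P(1-β)x+N₀))` and `θ₁` as given, `θ₁ > 0`, `ν θ₁ = 0`, `ν < 0` on `[0, θ₁)` and
`ν ≥ 0` on `[θ₁, ∞)`. -/
theorem nu_sign_PS (P N0 η β δ : ℝ) (hP : 0 < P) (hN0 : 0 < N0)
    (hη0 : 0 < η) (hη1 : η ≤ 1) (hβ0 : 0 < β) (hβ1 : β < 1) (hδ : 1 < δ)
    (ν : ℝ → ℝ)
    (hν : ∀ x, ν x = (1 - β) * (η * β * P * x / (N0 * (η * β * x + (1 - β)))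
        - P * δ / (P * (1 - β) * x + N0)))
    (θ1 : ℝ)
    (hθ1 : θ1 = ((δ - 1) / (1 - β)
        + Real.sqrt (((δ - 1) / (1 - β)) ^ 2 + 4 * δ * P / (η * β * N0))) / (2 * (P / N0))) :
    0 < θ1 ∧ ν θ1 = 0 ∧ (∀ x, 0 ≤ x → x < θ1 → ν x < 0) ∧ (∀ x, θ1 ≤ x → 0 ≤ ν x) :=
  nu_sign_PS_general P N0 η β δ hP hN0 hη0 hβ0 hβ1 hδ ν hν θ1 hθ1
end

section
/- Let P > 0, N₀ > 0, η ∈ (0,1], β ∈ (0,1), δ > 1, and let X and W be independent exponential random variables with means λ_SR > 0 and λ_RD > 0. Define ν(x) = (1−β)·( ηβPx/(N₀(ηβx + (1−β))) − Pδ/(P(1−β)x + N₀) ) and θ₁ = [ (δ−1)/(1−β) + √( ((δ−1)/(1−β))² + 4δP/(ηβN₀) ) ] / (2P/N₀). Then the secrecy outage probability of the PS policy satisfies ℙ( (1 + ηβ(1−β)P·X·W/(N₀(ηβW + (1−β)))) / (1 + (1−β)P·X/((1−β)P·W + N₀)) < δ ) = 1 − (1/λ_RD)·∫_{θ₁}^{∞}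 exp( −(δ−1)/(ν(x)·λ_SR) − x/λ_RD ) dx. -/
/-!
For `x, w > 0` the outage event `(1 + γ_D)/(1 + γ_R) < δ` clears its denominators to
`ν(w) x < δ - 1`, and the numerator of `ν(w)` is a positive multiple of a quadratic in `w` whose
positive root is `θ₁`, so `ν(w) > 0` exactly when `w > θ₁`. Conditioning on `W = w`, the
exponential tail of `X` gives `ℙ(X ≥ (δ - 1)/ν(w)) = exp(-(δ - 1)/(ν(w) λ_SR))` for `w > θ₁` and
`0` otherwise; integrating against the density of `W` gives the complement of the outage
probability.
-/

open MeasureTheory ProbabilityTheory Real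

lemma quadratic_root_pos {a b c : ℝ} (ha : 0 < a) (hc : 0 < c) :
    0 < (b + √(b ^ 2 + 4 * a * c)) / (2 * a) := by
  have hs : b ^ 2 < √(b ^ 2 + 4 * a * c) ^ 2 := by
    rw [sq_sqrt (by positivity)]; nlinarith [mul_pos ha hc]
  have := abs_lt_of_sq_lt_sq' hs (sqrt_nonneg _)
  exact div_pos (by linarith) (by positivity)

lemma quadratic_pos_iff_root_lt {a b c w : ℝ} (ha : 0 < a) (hc : 0 < c) (hw : 0 ≤ w) :
    0 < a * w ^ 2 - b * w - c ↔ (b + √(b ^ 2 + 4 * a * c)) / (2 * a) < w := by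
  set s := √(b ^ 2 + 4 * a * c)
  have hs : s ^ 2 = b ^ 2 + 4 * a * c := sq_sqrt (by positivity)
  -- the other root `(b - s) / (2a)` is negative, so for `w ≥ 0` only the factor
  -- `w - (b + s) / (2a)` can change sign
  have hsb : b < s := by nlinarith [sqrt_nonneg (b ^ 2 + 4 * a * c), mul_pos ha hc]
  have hfactor : a * w ^ 2 - b * w - c
      = a * (w - (b + s) / (2 * a)) * (w - (b - s) / (2 * a)) := by
    field_simp; linear_combination hs
  have hother : 0 < w - (b - s) / (2 * a) := by
    have : (b - s) / (2 * a) < 0 := div_neg_of_neg_of_pos (by linarith) (by positivity)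
    linarith
  rw [hfactor, mul_pos_iff_of_pos_right hother, mul_pos_iff_of_pos_left ha, sub_pos]

lemma expMeasure_Iic_zero {r : ℝ} (hr : 0 < r) : expMeasure r (Set.Iic 0) = 0 := by
  rw [show expMeasure r = volume.withDensity (exponentialPDF r) from rfl,
    withDensity_apply _ measurableSet_Iic, lintegral_exponentialPDF_eq_antiDeriv hr 0]
  simp

lemma ae_pos_expMeasure {r : ℝ} (hr : 0 < r) : ∀ᵐ x ∂expMeasure r, 0 < x := by
  simp only [ae_iff, not_lt]
  exact expMeasure_Iic_zero hr

lemma expMeasure_Ici {r c : ℝ} (hr : 0 < r) (hc : 0 ≤ c) :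
    expMeasure r (Set.Ici c) = ENNReal.ofReal (rexp (-(r * c))) := by
  have := isProbabilityMeasure_expMeasure hr
  have hatom : expMeasure r {c} = 0 :=
    withDensity_absolutelyContinuous _ _ (measure_singleton c)
  rw [measure_congr (Ioi_ae_eq_Ici' hatom).symm, ← Set.compl_Iic,
    prob_compl_eq_one_sub measurableSet_Iic, ← ofReal_measureReal, ← cdf_eq_real,
    cdf_expMeasure_eq hr, if_pos hc, ← ENNReal.ofReal_one, ← ENNReal.ofReal_sub _
      (sub_nonneg.2 (exp_le_one_iff.2 (by nlinarith)))]
  simp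

lemma expMeasure_setOf_le_mul {r a : ℝ} (hr : 0 < r) (ha : 0 < a) (b : ℝ) :
    expMeasure r {x | a ≤ b * x} =
      {b : ℝ | 0 < b}.indicator (fun b ↦ ENNReal.ofReal (rexp (-(r * a / b)))) b := by
  by_cases hb : 0 < b
  · have hset : {x | a ≤ b * x} = Set.Ici (a / b) := by
      ext x; simp [div_le_iff₀ hb, mul_comm]
    rw [hset, expMeasure_Ici hr (by positivity),
      Set.indicator_of_mem (show b ∈ {b : ℝ | 0 < b} from hb), mul_div_assoc]
  · rw [Set.indicator_of_notMem (show b ∉ {b : ℝ | 0 < b} from hb)]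
    refine measure_mono_null (fun x hx ↦ ?_) (expMeasure_Iic_zero hr)
    simp only [Set.mem_ofPred_eq, Set.mem_Iic] at hx ⊢
    nlinarith

lemma measure_le_mul_of_indepFun_expMeasure {Ω β : Type*} [MeasurableSpace Ω]
    [MeasurableSpace β] {μ : Measure Ω} [IsFiniteMeasure μ] {X : Ω → ℝ} {W : Ω → β}
    (hXm : Measurable X) (hWm : Measurable W) (hindep : IndepFun X W μ) {r : ℝ} (hr : 0 < r)
    (hX : μ.map X = expMeasure r) {g : β → ℝ} (hg : Measurable g) {a : ℝ} (ha : 0 < a) :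
    μ {ω | a ≤ g (W ω) * X ω} =
      ∫⁻ w in {w | 0 < g w}, ENNReal.ofReal (rexp (-(r * a / g w))) ∂μ.map W := by
  have hS : MeasurableSet {p : ℝ × β | a ≤ g p.2 * p.1} :=
    measurableSet_le measurable_const ((hg.comp measurable_snd).mul measurable_fst)
  have hlaw : μ.map (fun ω ↦ (X ω, W ω)) = (μ.map X).prod (μ.map W) :=
    (indepFun_iff_map_prod_eq_prod_map_map hXm.aemeasurable hWm.aemeasurable).1 hindep
  rw [← lintegral_indicator (measurableSet_lt measurable_const hg)]
  calc μ {ω | a ≤ g (W ω) * X ω}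
      = μ.map (fun ω ↦ (X ω, W ω)) {p : ℝ × β | a ≤ g p.2 * p.1} :=
        (Measure.map_apply (hXm.prodMk hWm) hS).symm
    _ = ∫⁻ w, expMeasure r {x | a ≤ g w * x} ∂μ.map W := by
        rw [hlaw, Measure.prod_apply_symm hS, hX]; rfl
    _ = _ := by simp_rw [expMeasure_setOf_le_mul hr ha]; rfl

lemma toReal_setLIntegral_expMeasure {r : ℝ} (hr : 0 ≤ r) {s : Set ℝ} (hs : MeasurableSet s)
    (hs0 : s ⊆ Set.Ici 0) {f : ℝ → ℝ} (hf : Measurable f) (hf0 : ∀ x, 0 ≤ f x) :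
    (∫⁻ x in s, ENNReal.ofReal (f x) ∂expMeasure r).toReal =
      ∫ x in s, r * rexp (-(r * x)) * f x := by
  have hdensity : ∀ x ∈ s, (exponentialPDF r * fun x ↦ ENNReal.ofReal (f x)) x =
      ENNReal.ofReal (r * rexp (-(r * x)) * f x) := fun x hx ↦ by
    rw [Pi.mul_apply, exponentialPDF_of_nonneg (hs0 hx), ← ENNReal.ofReal_mul (by positivity)]
  have hpdf : Measurable (exponentialPDF r) := (measurable_exponentialPDFReal r).ennreal_ofReal
  rw [show expMeasure r = volume.withDensity (exponentialPDF r) from rfl,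
    setLIntegral_withDensity_eq_setLIntegral_mul _ hpdf hf.ennreal_ofReal hs,
    setLIntegral_congr_fun hs hdensity]
  exact (integral_eq_lintegral_of_nonneg_ae
    (Filter.Eventually.of_forall fun x ↦ mul_nonneg (by positivity) (hf0 x)) (by fun_prop)).symm

noncomputable def nuPS (P N0 η β δ x : ℝ) : ℝ :=
  (1 - β) * (η * β * P * x / (N0 * (η * β * x + (1 - β))) - P * δ / (P * (1 - β) * x + N0))

noncomputable def thetaPS (P N0 η β δ : ℝ) : ℝ :=
  ((δ - 1) / (1 - β) + √(((δ - 1) / (1 - β)) ^ 2 + 4 * δ * P / (η * β * N0))) / (2 * (P / N0))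

lemma measurable_nuPS (P N0 η β δ : ℝ) : Measurable (nuPS P N0 η β δ) := by
  unfold nuPS; fun_prop

lemma thetaPS_eq_quadratic_root (P N0 η β δ : ℝ) :
    thetaPS P N0 η β δ = ((δ - 1) / (1 - β)
      + √(((δ - 1) / (1 - β)) ^ 2 + 4 * (P / N0) * (δ / (η * β)))) / (2 * (P / N0)) := by
  rw [thetaPS]; ring_nf

lemma thetaPS_pos {P N0 η β δ : ℝ} (hP : 0 < P) (hN0 : 0 < N0) (hη : 0 < η) (hβ : 0 < β)
    (hδ : 0 < δ) : 0 < thetaPS P N0 η β δ := by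
  rw [thetaPS_eq_quadratic_root]
  exact quadratic_root_pos (by positivity) (by positivity)

lemma nuPS_pos_iff {P N0 η β δ w : ℝ} (hP : 0 < P) (hN0 : 0 < N0) (hη : 0 < η) (hβ0 : 0 < β)
    (hβ1 : β < 1) (hδ : 0 < δ) (hw : 0 ≤ w) :
    0 < nuPS P N0 η β δ w ↔ thetaPS P N0 η β δ < w := by
  have hβ : 0 < 1 - β := sub_pos.2 hβ1
  have hD : 0 < N0 * (η * β * w + (1 - β)) * (P * (1 - β) * w + N0) := by positivity
  have hnu : nuPS P N0 η β δ w = (1 - β) ^ 2 * η * β * P * N0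
      * ((P / N0) * w ^ 2 - (δ - 1) / (1 - β) * w - δ / (η * β))
      / (N0 * (η * β * w + (1 - β)) * (P * (1 - β) * w + N0)) := by
    rw [nuPS]; field_simp; ring
  rw [hnu, div_pos_iff_of_pos_right hD, mul_pos_iff_of_pos_left (by positivity),
    thetaPS_eq_quadratic_root]
  exact quadratic_pos_iff_root_lt (by positivity) (by positivity) hw

lemma secrecy_ratio_lt_iff {P N0 η β δ x w : ℝ} (hP : 0 < P) (hN0 : 0 < N0) (hη : 0 < η)
    (hβ0 : 0 < β) (hβ1 : β < 1) (hx : 0 ≤ x) (hw : 0 ≤ w) :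
    (1 + η * β * (1 - β) * P * x * w / (N0 * (η * β * w + (1 - β)))) /
        (1 + (1 - β) * P * x / ((1 - β) * P * w + N0)) < δ ↔ nuPS P N0 η β δ w * x < δ - 1 := by
  have hβ : 0 < 1 - β := sub_pos.2 hβ1
  have hD1 : 0 < N0 * (η * β * w + (1 - β)) := by positivity
  have hD2 : 0 < (1 - β) * P * w + N0 := by positivity
  have hgap : δ * (1 + (1 - β) * P * x / ((1 - β) * P * w + N0))
      - (1 + η * β * (1 - β) * P * x * w / (N0 * (η * β * w + (1 - β))))
      = (δ - 1) - nuPS P N0 η β δ w * x := by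
    rw [nuPS]; field_simp; ring
  rw [div_lt_iff₀ (by positivity)]
  constructor <;> intro h <;> linarith

theorem secrecy_outage_PS_general
    {Ω : Type*} [MeasurableSpace Ω] (μ : Measure Ω) [IsProbabilityMeasure μ]
    (X W : Ω → ℝ) (hXm : Measurable X) (hWm : Measurable W)
    (hindep : IndepFun X W μ)
    (lamSR lamRD : ℝ) (hlamSR : 0 < lamSR) (hlamRD : 0 < lamRD)
    (hX : Measure.map X μ = expMeasure lamSR⁻¹)
    (hW : Measure.map W μ = expMeasure lamRD⁻¹)
    (P N0 η β δ : ℝ) (hP : 0 < P) (hN0 : 0 < N0)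
    (hη0 : 0 < η) (hβ0 : 0 < β) (hβ1 : β < 1) (hδ : 1 < δ)
    (ν : ℝ → ℝ)
    (hν : ∀ x, ν x = (1 - β) * (η * β * P * x / (N0 * (η * β * x + (1 - β)))
        - P * δ / (P * (1 - β) * x + N0)))
    (θ1 : ℝ)
    (hθ1 : θ1 = ((δ - 1) / (1 - β)
        + Real.sqrt (((δ - 1) / (1 - β)) ^ 2 + 4 * δ * P / (η * β * N0))) / (2 * (P / N0))) :
    (μ {ω | (1 + η * β * (1 - β) * P * X ω * W ω / (N0 * (η * β * W ω + (1 - β)))) /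
        (1 + (1 - β) * P * X ω / ((1 - β) * P * W ω + N0)) < δ}).toReal =
      1 - (1 / lamRD) * ∫ x in Set.Ioi θ1,
        Real.exp (-(δ - 1) / (ν x * lamSR) - x / lamRD) := by
  obtain rfl : ν = nuPS P N0 η β δ := funext hν
  obtain rfl : θ1 = thetaPS P N0 η β δ := hθ1
  have hX0 : ∀ᵐ ω ∂μ, 0 < X ω :=
    ae_of_ae_map hXm.aemeasurable (hX ▸ ae_pos_expMeasure (inv_pos.2 hlamSR))
  have hW0 : ∀ᵐ w ∂μ.map W, 0 < w := hW ▸ ae_pos_expMeasure (inv_pos.2 hlamRD)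
  have houtage : {ω | (1 + η * β * (1 - β) * P * X ω * W ω / (N0 * (η * β * W ω + (1 - β)))) /
      (1 + (1 - β) * P * X ω / ((1 - β) * P * W ω + N0)) < δ}
      =ᵐ[μ] ({ω | δ - 1 ≤ nuPS P N0 η β δ (W ω) * X ω}ᶜ : Set Ω) := by
    refine Filter.eventuallyEq_set.2 ?_
    filter_upwards [hX0, ae_of_ae_map hWm.aemeasurable hW0] with ω hx hw
    exact (secrecy_ratio_lt_iff hP hN0 hη0 hβ0 hβ1 hx.le hw.le).trans not_le.symm
  have hpositive : {w | 0 < nuPS P N0 η β δ w} =ᵐ[μ.map W] Set.Ioi (thetaPS P N0 η β δ) := by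
    refine Filter.eventuallyEq_set.2 ?_
    filter_upwards [hW0] with w hw
    exact nuPS_pos_iff hP hN0 hη0 hβ0 hβ1 (by linarith) hw.le
  have hsecure : μ.real {ω | δ - 1 ≤ nuPS P N0 η β δ (W ω) * X ω} = (1 / lamRD) *
      ∫ x in Set.Ioi (thetaPS P N0 η β δ),
        rexp (-(δ - 1) / (nuPS P N0 η β δ x * lamSR) - x / lamRD) := by
    rw [measureReal_def, measure_le_mul_of_indepFun_expMeasure hXm hWm hindep
        (inv_pos.2 hlamSR) hX (measurable_nuPS P N0 η β δ) (sub_pos.2 hδ),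
      setLIntegral_congr hpositive, hW,
      toReal_setLIntegral_expMeasure (inv_nonneg.2 hlamRD.le) measurableSet_Ioi
        (fun w hw ↦ ((thetaPS_pos hP hN0 hη0 hβ0 (by linarith)).trans hw).le)
        (by have := measurable_nuPS P N0 η β δ; fun_prop) (fun _ ↦ (exp_pos _).le),
      ← integral_const_mul]
    refine setIntegral_congr_fun measurableSet_Ioi fun w _ ↦ ?_
    rw [one_div, mul_assoc, ← exp_add]
    ring_nf
  have hsecure_meas : MeasurableSet {ω | δ - 1 ≤ nuPS P N0 η β δ (W ω) * X ω} :=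
    measurableSet_le measurable_const (((measurable_nuPS P N0 η β δ).comp hWm).mul hXm)
  rw [← measureReal_def, measureReal_congr houtage, probReal_compl_eq_one_sub hsecure_meas,
    hsecure]

/-- **Secrecy outage probability of the PS policy (Proposition 1).** With `X = |h_SR|²` and
`W = |h_RD|²` independent exponentials with means `λ_SR, λ_RD`, the high-SNR secrecy outage
probability equals `1 - (1/λ_RD) ∫_{θ₁}^∞ exp(-(δ-1)/(ν(x) λ_SR) - x/λ_RD) dx`. -/
theorem secrecy_outage_PS
    {Ω : Type*} [MeasurableSpace Ω] (μ : Measure Ω) [IsProbabilityMeasure μ]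
    (X W : Ω → ℝ) (hXm : Measurable X) (hWm : Measurable W)
    (hindep : IndepFun X W μ)
    (lamSR lamRD : ℝ) (hlamSR : 0 < lamSR) (hlamRD : 0 < lamRD)
    (hX : Measure.map X μ = expMeasure lamSR⁻¹)
    (hW : Measure.map W μ = expMeasure lamRD⁻¹)
    (P N0 η β δ : ℝ) (hP : 0 < P) (hN0 : 0 < N0)
    (hη0 : 0 < η) (hη1 : η ≤ 1) (hβ0 : 0 < β) (hβ1 : β < 1) (hδ : 1 < δ)
    (ν : ℝ → ℝ)
    (hν : ∀ x, ν x = (1 - β) * (η * β * P * x / (N0 * (η * β * x + (1 - β)))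
        - P * δ / (P * (1 - β) * x + N0)))
    (θ1 : ℝ)
    (hθ1 : θ1 = ((δ - 1) / (1 - β)
        + Real.sqrt (((δ - 1) / (1 - β)) ^ 2 + 4 * δ * P / (η * β * N0))) / (2 * (P / N0))) :
    (μ {ω | (1 + η * β * (1 - β) * P * X ω * W ω / (N0 * (η * β * W ω + (1 - β)))) /
        (1 + (1 - β) * P * X ω / ((1 - β) * P * W ω + N0)) < δ}).toReal =
      1 - (1 / lamRD) * ∫ x in Set.Ioi θ1,
        Real.exp (-(δ - 1) / (ν x * lamSR) - x / lamRD) :=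
  secrecy_outage_PS_general μ X W hXm hWm hindep lamSR lamRD hlamSR hlamRD hX hW P N0 η β δ hP hN0
    hη0 hβ0 hβ1 hδ ν hν θ1 hθ1
end

section
/- Let P > 0, N₀ > 0, η ∈ (0,1], β ∈ (0,1). For all x > 0 and y > 0, the exact SNRs γ_D(x,y) = ηβ(1−β)Pxy / ( ηβyN₀ + N₀(1−β) + N₀²/(P(x+y)) ) and γ_R(x,y) = (1−β)Px/((1−β)Py + N₀) satisfy γ_D(x,y) > γ_R(x,y) if and only if (x + y)·P(1−β)·(ηβP·y² − N₀) > N₀². -/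
open Real

/-- **Positive secrecy event for the exact PS SNRs.** For `x, y > 0`, the exact SNRs satisfy
`γ_D(x,y) > γ_R(x,y)` iff `(x+y) P (1-β) (ηβP y² - N₀) > N₀²`. -/
theorem positive_secrecy_iff_PS (P N0 η β : ℝ) (hP : 0 < P) (hN0 : 0 < N0)
    (hη0 : 0 < η) (hη1 : η ≤ 1) (hβ0 : 0 < β) (hβ1 : β < 1)
    (x y : ℝ) (hx : 0 < x) (hy : 0 < y) :
    η * β * (1 - β) * P * x * y /
        (η * β * y * N0 + N0 * (1 - β) + N0 ^ 2 / (P * (x + y))) >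
      (1 - β) * P * x / ((1 - β) * P * y + N0) ↔
    (x + y) * (P * (1 - β)) * (η * β * P * y ^ 2 - N0) > N0 ^ 2 := by
  have hb1 : 0 < 1 - β := by linarith
  have hs : 0 < P * (x + y) := by positivity
  have hB : 0 < η * β * y * N0 + N0 * (1 - β) + N0 ^ 2 / (P * (x + y)) := by positivity
  have hD : 0 < (1 - β) * P * y + N0 := by positivity
  have hc : N0 ^ 2 / (P * (x + y)) * (P * (x + y)) = N0 ^ 2 :=
    div_mul_cancel₀ _ (ne_of_gt hs)
  rw [gt_iff_lt, div_lt_div_iff₀ hD hB, gt_iff_lt]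
  constructor <;> intro h
  · nlinarith [mul_pos (mul_pos hb1 hP) hx, mul_lt_mul_of_pos_right h hs]
  · nlinarith [mul_pos (mul_pos hb1 hP) hx, mul_pos (mul_pos (mul_pos hb1 hP) hx) hs,
      div_pos (sq_pos_of_pos hN0) hs]
end

section
/- Let P > 0, N₀ > 0, η ∈ (0,1], β ∈ (0,1). Define θ₂ = √(N₀/(ηβP)) and ψ(x) = N₀²/( P(1−β)(ηβP·x² − N₀) ) − x for x ≠ θ₂. Then ψ(x) < 0 for all 0 ≤ x < θ₂; there exists a unique θ₃ ∈ (θ₂, ∞) with ψ(θ₃) = 0, and θ₃ satisfies the cubic equation θ₃³ − A·θ₃ − B = 0 with A = N₀/(ηβP) and B = N₀²/(ηβ(1−β)P²); moreover ψ(x) ≥ 0 for θ₂ < x ≤ θ₃ and ψ(x) < 0 for x > θ₃. -/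
/-!
Below `θ₂` the first term of `ψ` is negative, so `ψ < 0`. Above `θ₂`, clearing the (positive)
denominator shows that `ψ` has the sign of `-g` for the cubic `g(x) = P(1-β) x (ηβP x² - N₀) - N₀²`.
On `[θ₂, ∞)` this `g` is strictly increasing, starts at `g(θ₂) = -N₀² < 0` and tends to `+∞`, so it
has exactly one zero `θ₃`; dividing `g(θ₃) = 0` by `ηβ(1-β)P²` gives the cubic equation.
-/

open Real Set Filter

variable {c D N x : ℝ}

/-- `ψ` of the PS policy with `c = ηβP`, `D = P(1-β)`, `N = N₀`. -/
noncomputable def psiPS (c D N x : ℝ) : ℝ := N ^ 2 / (D * (c * x ^ 2 - N)) - x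

def psiCubic (c D N x : ℝ) : ℝ := D * c * x ^ 3 - D * N * x - N ^ 2

lemma mul_sq_sub_nonneg_of_sqrt_le (hc : 0 < c) (h : √(N / c) ≤ x) : 0 ≤ c * x ^ 2 - N := by
  have := (div_le_iff₀ hc).1 (sqrt_le_iff.1 h).2
  linarith

lemma mul_sq_sub_pos_of_sqrt_lt (hc : 0 < c) (h : √(N / c) < x) : 0 < c * x ^ 2 - N := by
  have := (div_lt_iff₀ hc).1 ((sqrt_lt' ((sqrt_nonneg _).trans_lt h)).1 h)
  linarith

lemma mul_sq_sub_neg_of_lt_sqrt (hc : 0 < c) (hx : 0 ≤ x) (h : x < √(N / c)) :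
    c * x ^ 2 - N < 0 := by
  have := (lt_div_iff₀ hc).1 ((lt_sqrt hx).1 h)
  linarith

lemma psiCubic_eq_zero_iff (hc : c ≠ 0) (hD : D ≠ 0) :
    psiCubic c D N x = 0 ↔ x ^ 3 - N / c * x - N ^ 2 / (c * D) = 0 := by
  unfold psiCubic
  constructor <;> intro h
  · field_simp
    linear_combination h
  · field_simp at h
    linear_combination h

lemma psiCubic_sqrt_div (hc : 0 < c) (hN : 0 ≤ N) : psiCubic c D N √(N / c) = -N ^ 2 := by
  have hsq : c * √(N / c) ^ 2 = N := by
    rw [sq_sqrt (div_nonneg hN hc.le)]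
    field_simp
  unfold psiCubic
  linear_combination D * √(N / c) * hsq

lemma strictMonoOn_psiCubic (hc : 0 < c) (hD : 0 < D) :
    StrictMonoOn (psiCubic c D N) (Ici √(N / c)) := by
  intro a ha b _ hab
  have ha0 : 0 ≤ a := (sqrt_nonneg _).trans ha
  have hca := mul_sq_sub_nonneg_of_sqrt_le hc ha
  have hfactor : 0 < c * (b ^ 2 + a * b + a ^ 2) - N := by
    have : 0 < c * b ^ 2 := by have := ha0.trans_lt hab; positivity
    have : 0 ≤ c * (a * b) := by have := ha0.trans hab.le; positivity
    nlinarith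
  have : psiCubic c D N b - psiCubic c D N a
      = D * (b - a) * (c * (b ^ 2 + a * b + a ^ 2) - N) := by
    unfold psiCubic
    ring
  nlinarith [mul_pos (mul_pos hD (sub_pos.2 hab)) hfactor]

lemma tendsto_psiCubic_atTop (hc : 0 < c) (hD : 0 < D) :
    Tendsto (psiCubic c D N) atTop atTop := by
  have hquad : Tendsto (fun x ↦ c * x ^ 2 + -N) atTop atTop :=
    tendsto_atTop_add_const_right _ _ ((tendsto_pow_atTop two_ne_zero).const_mul_atTop hc)
  have := tendsto_atTop_add_const_right _ (-N ^ 2)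
    ((tendsto_id.atTop_mul_atTop₀ hquad).const_mul_atTop hD)
  convert this using 2 with x
  unfold psiCubic
  simp only [id]
  ring

lemma exists_psiCubic_eq_zero (hc : 0 < c) (hD : 0 < D) (hN : 0 < N) :
    ∃ θ, √(N / c) < θ ∧ psiCubic c D N θ = 0 := by
  obtain ⟨M, hMpos, hMge⟩ :=
    (((tendsto_psiCubic_atTop (N := N) hc hD).eventually_gt_atTop 0).and
      (eventually_ge_atTop √(N / c))).exists
  have hcont : ContinuousOn (psiCubic c D N) (Icc √(N / c) M) := by
    unfold psiCubic
    fun_prop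
  have hzero : (0 : ℝ) ∈ Ioo (psiCubic c D N √(N / c)) (psiCubic c D N M) := by
    rw [psiCubic_sqrt_div hc hN.le]
    exact ⟨by nlinarith, hMpos⟩
  obtain ⟨θ, hθ, hθzero⟩ := intermediate_value_Ioo hMge hcont hzero
  exact ⟨θ, hθ.1, hθzero⟩

lemma psiPS_neg_of_lt_sqrt (hc : 0 < c) (hD : 0 < D) (hN : N ≠ 0) (hx0 : 0 ≤ x)
    (hx : x < √(N / c)) : psiPS c D N x < 0 := by
  have := div_neg_of_pos_of_neg (sq_pos_of_ne_zero hN) (mul_neg_of_pos_of_neg hD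
    (mul_sq_sub_neg_of_lt_sqrt hc hx0 hx))
  unfold psiPS
  linarith

section AboveSqrt

variable (hc : 0 < c) (hD : 0 < D) (hx : √(N / c) < x)
include hc hD hx

lemma psiPS_eq_neg_psiCubic_div :
    psiPS c D N x = -psiCubic c D N x / (D * (c * x ^ 2 - N)) := by
  have := (mul_sq_sub_pos_of_sqrt_lt hc hx).ne'
  unfold psiPS psiCubic
  field_simp
  ring

lemma psiPS_eq_zero_iff : psiPS c D N x = 0 ↔ psiCubic c D N x = 0 := by
  rw [psiPS_eq_neg_psiCubic_div hc hD hx, div_eq_zero_iff, neg_eq_zero,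
    or_iff_left (mul_pos hD (mul_sq_sub_pos_of_sqrt_lt hc hx)).ne']

lemma psiPS_nonneg_iff : 0 ≤ psiPS c D N x ↔ psiCubic c D N x ≤ 0 := by
  rw [psiPS_eq_neg_psiCubic_div hc hD hx,
    le_div_iff₀ (mul_pos hD (mul_sq_sub_pos_of_sqrt_lt hc hx)), zero_mul, neg_nonneg]

lemma psiPS_neg_iff : psiPS c D N x < 0 ↔ 0 < psiCubic c D N x := by
  rw [psiPS_eq_neg_psiCubic_div hc hD hx,
    div_lt_iff₀ (mul_pos hD (mul_sq_sub_pos_of_sqrt_lt hc hx)), zero_mul, neg_lt_zero]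

end AboveSqrt

theorem psi_sign_PS_general (P N0 η β : ℝ) (hP : 0 < P) (hN0 : 0 < N0)
    (hη0 : 0 < η) (hβ0 : 0 < β) (hβ1 : β < 1)
    (θ2 : ℝ) (hθ2 : θ2 = Real.sqrt (N0 / (η * β * P)))
    (ψ : ℝ → ℝ)
    (hψ : ∀ x, ψ x = N0 ^ 2 / (P * (1 - β) * (η * β * P * x ^ 2 - N0)) - x)
    (A B : ℝ) (hA : A = N0 / (η * β * P)) (hB : B = N0 ^ 2 / (η * β * (1 - β) * P ^ 2)) :
    (∀ x, 0 ≤ x → x < θ2 → ψ x < 0) ∧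
    ∃ θ3, θ2 < θ3 ∧ ψ θ3 = 0 ∧
      (∀ t, θ2 < t → ψ t = 0 → t = θ3) ∧
      θ3 ^ 3 - A * θ3 - B = 0 ∧
      (∀ x, θ2 < x → x ≤ θ3 → 0 ≤ ψ x) ∧
      (∀ x, θ3 < x → ψ x < 0) := by
  have hc : 0 < η * β * P := by positivity
  have hD : 0 < P * (1 - β) := mul_pos hP (sub_pos.2 hβ1)
  obtain rfl : ψ = psiPS (η * β * P) (P * (1 - β)) N0 := funext hψ
  subst hθ2 hA hB
  have hmono := strictMonoOn_psiCubic (N := N0) hc hD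
  obtain ⟨θ3, hθ3, hgθ3⟩ := exists_psiCubic_eq_zero hc hD hN0
  refine ⟨fun x ↦ psiPS_neg_of_lt_sqrt hc hD hN0.ne', θ3, hθ3,
    (psiPS_eq_zero_iff hc hD hθ3).2 hgθ3, fun t ht hψt ↦ ?_, ?_, fun x hx hxθ3 ↦ ?_, fun x hx ↦ ?_⟩
  · exact hmono.injOn ht.le hθ3.le (((psiPS_eq_zero_iff hc hD ht).1 hψt).trans hgθ3.symm)
  · rw [show η * β * (1 - β) * P ^ 2 = η * β * P * (P * (1 - β)) by ring]
    exact (psiCubic_eq_zero_iff hc.ne' hD.ne').1 hgθ3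
  · exact (psiPS_nonneg_iff hc hD hx).2 (hgθ3 ▸ (hmono.le_iff_le hx.le hθ3.le).2 hxθ3)
  · exact (psiPS_neg_iff hc hD (hθ3.trans hx)).2 (hgθ3 ▸ hmono hθ3.le (hθ3.trans hx).le hx)

/-- **Sign pattern of `ψ` for the PS policy.** With `θ₂ = √(N₀/(ηβP))` and
`ψ(x) = N₀²/(P(1-β)(ηβP x² - N₀)) - x`, `ψ < 0` on `[0, θ₂)`; there is a unique zero
`θ₃` of `ψ` in `(θ₂, ∞)`, which solves `x³ - Ax - B = 0` with `A = N₀/(ηβP)`,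
`B = N₀²/(ηβ(1-β)P²)`; `ψ ≥ 0` on `(θ₂, θ₃]` and `ψ < 0` on `(θ₃, ∞)`. -/
theorem psi_sign_PS (P N0 η β : ℝ) (hP : 0 < P) (hN0 : 0 < N0)
    (hη0 : 0 < η) (hη1 : η ≤ 1) (hβ0 : 0 < β) (hβ1 : β < 1)
    (θ2 : ℝ) (hθ2 : θ2 = Real.sqrt (N0 / (η * β * P)))
    (ψ : ℝ → ℝ)
    (hψ : ∀ x, ψ x = N0 ^ 2 / (P * (1 - β) * (η * β * P * x ^ 2 - N0)) - x)
    (A B : ℝ) (hA : A = N0 / (η * β * P)) (hB : B = N0 ^ 2 / (η * β * (1 - β) * P ^ 2)) :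
    (∀ x, 0 ≤ x → x < θ2 → ψ x < 0) ∧
    ∃ θ3, θ2 < θ3 ∧ ψ θ3 = 0 ∧
      (∀ t, θ2 < t → ψ t = 0 → t = θ3) ∧
      θ3 ^ 3 - A * θ3 - B = 0 ∧
      (∀ x, θ2 < x → x ≤ θ3 → 0 ≤ ψ x) ∧
      (∀ x, θ3 < x → ψ x < 0) :=
  psi_sign_PS_general P N0 η β hP hN0 hη0 hβ0 hβ1 θ2 hθ2 ψ hψ A B hA hB
end

section
/- Let P > 0, N₀ > 0, η ∈ (0,1], β ∈ (0,1), and let X and W be independent exponential random variables with means λ_SR > 0 and λ_RD > 0. Let θ₂ = √(N₀/(ηβP)), let ψ(x) = N₀²/( P(1−β)(ηβP·x² − N₀) ) − x, and let θ₃ be the unique zero of ψ in (θ₂, ∞). Then the probability of strictly positive secrecy rate satisfies ℙ( (X + W)·P(1−β)·(ηβP·W² − N₀) > N₀² ) = exp(−θ₃/λ_RD) + (1/λ_RD)·∫_{θ₂}^{θ₃} exp( −( ψ(x)/λ_SR + x/λ_RD ) ) dx. -/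
open MeasureTheory ProbabilityTheory Real Set

/-! Condition on `W = w`. For `0 ≤ w ≤ θ₂` the factor `ηβPw² - N₀` is nonpositive, so the event
forces `X < 0` and has probability zero; for `w > θ₂` it is the event `X > ψ(w)`. As `ψ` is
strictly decreasing on `(θ₂, ∞)` and vanishes at `θ₃`, `ℙ(X > ψ(w))` equals `exp(-ψ(w)/λ_SR)` on
`(θ₂, θ₃]` and `1` beyond `θ₃`; integrating against the density of `W` gives the two terms. -/

section ExponentialDistribution

variable {r : ℝ}

lemma expMeasure_eq_withDensity (r : ℝ) :
    expMeasure r = volume.withDensity (exponentialPDF r) := rfl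

lemma expMeasure_Iio_zero (r : ℝ) : expMeasure r (Iio 0) = 0 := by
  rw [expMeasure_eq_withDensity, withDensity_apply _ measurableSet_Iio,
    lintegral_exponentialPDF_of_nonpos le_rfl]

lemma ae_nonneg_expMeasure (r : ℝ) : ∀ᵐ x ∂expMeasure r, 0 ≤ x :=
  ae_iff.2 <| by simp only [not_le]; exact expMeasure_Iio_zero r

lemma expMeasure_Ioi_of_nonneg (hr : 0 < r) {x : ℝ} (hx : 0 ≤ x) :
    expMeasure r (Ioi x) = ENNReal.ofReal (exp (-(r * x))) := by
  have := isProbabilityMeasure_expMeasure hr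
  have hle : exp (-(r * x)) ≤ 1 := exp_le_one_iff.2 (by nlinarith)
  rw [← compl_Iic, prob_compl_eq_one_sub measurableSet_Iic, ← ofReal_cdf, cdf_expMeasure_eq hr,
    if_pos hx, ← ENNReal.ofReal_one, ← ENNReal.ofReal_sub _ (sub_nonneg.2 hle), sub_sub_cancel]

lemma expMeasure_Ioi_of_neg (hr : 0 < r) {x : ℝ} (hx : x < 0) : expMeasure r (Ioi x) = 1 := by
  have := isProbabilityMeasure_expMeasure hr
  rw [← compl_Iic, prob_compl_eq_one_sub measurableSet_Iic, ← ofReal_cdf, cdf_expMeasure_eq hr,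
    if_neg hx.not_ge, ENNReal.ofReal_zero, tsub_zero]

lemma setLIntegral_expMeasure_Ioc (hr : 0 < r) {a b : ℝ} (ha : 0 ≤ a) {f : ℝ → ℝ}
    (hfm : Measurable f) (hf : IntegrableOn f (Ioc a b)) (hf0 : ∀ x ∈ Ioc a b, 0 ≤ f x) :
    ∫⁻ x in Ioc a b, ENNReal.ofReal (f x) ∂expMeasure r =
      ENNReal.ofReal (∫ x in Ioc a b, r * exp (-(r * x)) * f x) := by
  have hdensity : EqOn (exponentialPDF r * fun x => ENNReal.ofReal (f x))
      (fun x => ENNReal.ofReal (r * exp (-(r * x)) * f x)) (Ioc a b) := by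
    intro x hx
    rw [Pi.mul_apply, exponentialPDF_of_nonneg (ha.trans hx.1.le),
      ← ENNReal.ofReal_mul (by positivity)]
  have hpdf : Measurable (exponentialPDF r) := (measurable_exponentialPDFReal r).ennreal_ofReal
  rw [expMeasure_eq_withDensity, setLIntegral_withDensity_eq_setLIntegral_mul _ hpdf
      hfm.ennreal_ofReal measurableSet_Ioc,
    setLIntegral_congr_fun measurableSet_Ioc hdensity, ofReal_integral_eq_lintegral_ofReal]
  · refine hf.bdd_mul (c := r) (by fun_prop) ?_
    filter_upwards [ae_restrict_mem measurableSet_Ioc] with x hx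
    have hexp : exp (-(r * x)) ≤ 1 := exp_le_one_iff.2 (by nlinarith [hx.1])
    rw [Real.norm_of_nonneg (by positivity)]
    nlinarith
  · filter_upwards [ae_restrict_mem measurableSet_Ioc] with x hx
    have := hf0 x hx
    positivity

lemma setLIntegral_Ioi_expMeasure_Ioi {s a b : ℝ} (hr : 0 < r) (hs : 0 < s) (ha : 0 ≤ a)
    (hab : a ≤ b) {φ : ℝ → ℝ} (hφm : Measurable φ) (hφ_nonneg : ∀ w ∈ Ioc a b, 0 ≤ φ w)
    (hφ_neg : ∀ w ∈ Ioi b, φ w < 0) :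
    ∫⁻ w in Ioi a, expMeasure s (Ioi (φ w)) ∂expMeasure r =
      ENNReal.ofReal (exp (-(r * b)) + ∫ w in Ioc a b, r * exp (-(r * w)) * exp (-(s * φ w))) := by
  have hint : IntegrableOn (fun w => exp (-(s * φ w))) (Ioc a b) := by
    refine Measure.integrableOn_of_bounded (M := 1) measure_Ioc_lt_top.ne (by fun_prop) ?_
    filter_upwards [ae_restrict_mem measurableSet_Ioc] with w hw
    rw [Real.norm_of_nonneg (exp_pos _).le, exp_le_one_iff]
    nlinarith [hφ_nonneg w hw]
  rw [← Ioc_union_Ioi_eq_Ioi hab, lintegral_union measurableSet_Ioi Ioc_disjoint_Ioi_same,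
    setLIntegral_congr_fun measurableSet_Ioc
      (fun w hw => expMeasure_Ioi_of_nonneg hs (hφ_nonneg w hw)),
    setLIntegral_congr_fun measurableSet_Ioi (fun w hw => expMeasure_Ioi_of_neg hs (hφ_neg w hw)),
    setLIntegral_expMeasure_Ioc hr ha (by fun_prop) hint (fun w _ => (exp_pos _).le),
    setLIntegral_one, expMeasure_Ioi_of_nonneg hr (ha.trans hab), add_comm,
    ENNReal.ofReal_add (exp_pos _).le]
  exact setIntegral_nonneg measurableSet_Ioc fun w _ => by positivity

end ExponentialDistribution

lemma ProbabilityTheory.IndepFun.measure_preimage_prodMk {Ω α β : Type*} [MeasurableSpace Ω]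
    [MeasurableSpace α] [MeasurableSpace β] {μ : Measure Ω} [IsFiniteMeasure μ] {W : Ω → α}
    {X : Ω → β} (hW : Measurable W) (hX : Measurable X) (h : IndepFun W X μ) {S : Set (α × β)}
    (hS : MeasurableSet S) :
    μ ((fun ω => (W ω, X ω)) ⁻¹' S) = ∫⁻ w, μ.map X (Prod.mk w ⁻¹' S) ∂μ.map W := by
  rw [← Measure.map_apply (hW.prodMk hX) hS,
    h.map_prod_eq_prod_map_map hW.aemeasurable hX.aemeasurable, Measure.prod_apply hS]

section SecrecyThreshold

variable {c d N w : ℝ}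

/-- The paper's `ψ`, with `c = P(1-β)` and `d = ηβP`. -/
noncomputable def secrecyThreshold (c d N w : ℝ) : ℝ := N ^ 2 / (c * (d * w ^ 2 - N)) - w

lemma lt_mul_sq_of_sqrt_div_lt (hd : 0 < d) (hw : √(N / d) < w) : N < d * w ^ 2 := by
  rw [← div_lt_iff₀' hd, ← Real.sqrt_lt' ((sqrt_nonneg _).trans_lt hw)]
  exact hw

lemma mul_sq_le_of_le_sqrt_div (hd : 0 < d) (hN : 0 ≤ N) (hw0 : 0 ≤ w) (hw : w ≤ √(N / d)) :
    d * w ^ 2 ≤ N := by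
  rw [← le_div_iff₀' hd, ← Real.le_sqrt hw0 (by positivity)]
  exact hw

lemma strictAntiOn_secrecyThreshold (hc : 0 < c) (hd : 0 < d) :
    StrictAntiOn (secrecyThreshold c d N) (Ioi √(N / d)) := by
  intro a ha b hb hab
  have hDa := sub_pos.2 (lt_mul_sq_of_sqrt_div_lt hd ha)
  have hab2 : a ^ 2 ≤ b ^ 2 := pow_le_pow_left₀ ((sqrt_nonneg _).trans ha.le) hab.le 2
  have : N ^ 2 / (c * (d * b ^ 2 - N)) ≤ N ^ 2 / (c * (d * a ^ 2 - N)) := by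
    gcongr
  unfold secrecyThreshold
  linarith

lemma setOf_secrecy_eq_Ioi (hc : 0 < c) (hw : N < d * w ^ 2) :
    {x | (x + w) * c * (d * w ^ 2 - N) > N ^ 2} = Ioi (secrecyThreshold c d N w) := by
  ext x
  rw [mem_ofPred_eq, mem_Ioi, secrecyThreshold, sub_lt_iff_lt_add,
    div_lt_iff₀ (mul_pos hc (sub_pos.2 hw)), mul_assoc, gt_iff_lt]

lemma setOf_secrecy_subset_Iio (hc : 0 < c) (hw0 : 0 ≤ w) (hw : d * w ^ 2 ≤ N) :
    {x | (x + w) * c * (d * w ^ 2 - N) > N ^ 2} ⊆ Iio 0 := by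
  intro x (hx : (x + w) * c * (d * w ^ 2 - N) > N ^ 2)
  rw [mem_Iio]
  by_contra! hx0
  have : (x + w) * c * (d * w ^ 2 - N) ≤ 0 :=
    mul_nonpos_of_nonneg_of_nonpos (by positivity) (sub_nonpos.2 hw)
  nlinarith [sq_nonneg N]

end SecrecyThreshold

lemma lintegral_expMeasure_setOf_secrecy {c d N : ℝ} (hc : 0 < c) (hd : 0 < d) (hN : 0 ≤ N)
    (r s : ℝ) :
    ∫⁻ w, expMeasure s {x | (x + w) * c * (d * w ^ 2 - N) > N ^ 2} ∂expMeasure r =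
      ∫⁻ w in Ioi √(N / d), expMeasure s (Ioi (secrecyThreshold c d N w)) ∂expMeasure r := by
  have hnull : ∀ᵐ w ∂(expMeasure r).restrict (Iic √(N / d)),
      expMeasure s {x | (x + w) * c * (d * w ^ 2 - N) > N ^ 2} = 0 := by
    filter_upwards [ae_restrict_of_ae (ae_nonneg_expMeasure r),
      ae_restrict_mem measurableSet_Iic] with w hw0 hw
    exact measure_mono_null
      (setOf_secrecy_subset_Iio hc hw0 (mul_sq_le_of_le_sqrt_div hd hN hw0 hw))
      (expMeasure_Iio_zero s)
  rw [← lintegral_add_compl _ measurableSet_Iic, compl_Iic, lintegral_congr_ae hnull,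
    lintegral_zero, zero_add]
  exact setLIntegral_congr_fun measurableSet_Ioi fun w hw => by
    rw [setOf_secrecy_eq_Ioi hc (lt_mul_sq_of_sqrt_div_lt hd hw)]

theorem prob_positive_secrecy_PS_general
    {Ω : Type*} [MeasurableSpace Ω] (μ : Measure Ω) [IsProbabilityMeasure μ]
    (X W : Ω → ℝ) (hXm : Measurable X) (hWm : Measurable W)
    (hindep : IndepFun X W μ)
    (lamSR lamRD : ℝ) (hlamSR : 0 < lamSR) (hlamRD : 0 < lamRD)
    (hX : Measure.map X μ = expMeasure lamSR⁻¹)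
    (hW : Measure.map W μ = expMeasure lamRD⁻¹)
    (P N0 η β : ℝ) (hP : 0 < P) (hN0 : 0 < N0)
    (hη0 : 0 < η) (hβ0 : 0 < β) (hβ1 : β < 1)
    (θ2 : ℝ) (hθ2 : θ2 = Real.sqrt (N0 / (η * β * P)))
    (ψ : ℝ → ℝ)
    (hψ : ∀ x, ψ x = N0 ^ 2 / (P * (1 - β) * (η * β * P * x ^ 2 - N0)) - x)
    (θ3 : ℝ) (hθ3 : θ2 < θ3) (hψθ3 : ψ θ3 = 0) :
    (μ {ω | (X ω + W ω) * (P * (1 - β)) * (η * β * P * W ω ^ 2 - N0) > N0 ^ 2}).toReal =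
      Real.exp (-θ3 / lamRD)
        + (1 / lamRD) * ∫ x in θ2..θ3, Real.exp (-(ψ x / lamSR + x / lamRD)) := by
  have hc : 0 < P * (1 - β) := mul_pos hP (sub_pos.2 hβ1)
  have hd : 0 < η * β * P := by positivity
  obtain rfl : ψ = secrecyThreshold (P * (1 - β)) (η * β * P) N0 := funext hψ
  subst hθ2
  have hanti := strictAntiOn_secrecyThreshold (N := N0) hc hd
  set S : Set (ℝ × ℝ) := {p | (p.2 + p.1) * (P * (1 - β)) * (η * β * P * p.1 ^ 2 - N0) > N0 ^ 2}
  have hS : MeasurableSet S := measurableSet_lt measurable_const (by fun_prop)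
  change (μ ((fun ω => (W ω, X ω)) ⁻¹' S)).toReal = _
  rw [hindep.symm.measure_preimage_prodMk hWm hXm hS, hX, hW]
  refine (congrArg ENNReal.toReal (lintegral_expMeasure_setOf_secrecy hc hd hN0.le _ _)).trans ?_
  rw [setLIntegral_Ioi_expMeasure_Ioi (inv_pos.2 hlamRD) (inv_pos.2 hlamSR) (sqrt_nonneg _) hθ3.le
      (by unfold secrecyThreshold; fun_prop)
      (fun w hw => hψθ3 ▸ hanti.antitoneOn hw.1 hθ3 hw.2)
      (fun w hw => hψθ3 ▸ hanti hθ3 (hθ3.trans hw) hw),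
    ENNReal.toReal_ofReal (by positivity), intervalIntegral.integral_of_le hθ3.le,
    ← integral_const_mul]
  congr 1
  · ring_nf
  · refine setIntegral_congr_fun measurableSet_Ioc fun x _ => ?_
    rw [mul_assoc, ← exp_add]
    ring_nf

/-- **Probability of strictly positive secrecy rate, PS policy (Proposition 3, exact form).**
`ℙ((X+W) P(1-β)(ηβP W² - N₀) > N₀²) = e^{-θ₃/λ_RD} + (1/λ_RD)∫_{θ₂}^{θ₃}
e^{-(ψ(x)/λ_SR + x/λ_RD)} dx`, where `θ₃` is the unique zero of `ψ` in `(θ₂, ∞)`. -/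
theorem prob_positive_secrecy_PS
    {Ω : Type*} [MeasurableSpace Ω] (μ : Measure Ω) [IsProbabilityMeasure μ]
    (X W : Ω → ℝ) (hXm : Measurable X) (hWm : Measurable W)
    (hindep : IndepFun X W μ)
    (lamSR lamRD : ℝ) (hlamSR : 0 < lamSR) (hlamRD : 0 < lamRD)
    (hX : Measure.map X μ = expMeasure lamSR⁻¹)
    (hW : Measure.map W μ = expMeasure lamRD⁻¹)
    (P N0 η β : ℝ) (hP : 0 < P) (hN0 : 0 < N0)
    (hη0 : 0 < η) (hη1 : η ≤ 1) (hβ0 : 0 < β) (hβ1 : β < 1)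
    (θ2 : ℝ) (hθ2 : θ2 = Real.sqrt (N0 / (η * β * P)))
    (ψ : ℝ → ℝ)
    (hψ : ∀ x, ψ x = N0 ^ 2 / (P * (1 - β) * (η * β * P * x ^ 2 - N0)) - x)
    (θ3 : ℝ) (hθ3 : θ2 < θ3) (hψθ3 : ψ θ3 = 0)
    (huniq : ∀ t, θ2 < t → ψ t = 0 → t = θ3) :
    (μ {ω | (X ω + W ω) * (P * (1 - β)) * (η * β * P * W ω ^ 2 - N0) > N0 ^ 2}).toReal =
      Real.exp (-θ3 / lamRD)
        + (1 / lamRD) * ∫ x in θ2..θ3, Real.exp (-(ψ x / lamSR + x / lamRD)) :=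
  prob_positive_secrecy_PS_general μ X W hXm hWm hindep lamSR lamRD hlamSR hlamRD hX hW P N0 η β hP
    hN0 hη0 hβ0 hβ1 θ2 hθ2 ψ hψ θ3 hθ3 hψθ3
end

section
/- Let P > 0, N₀ > 0, η ∈ (0,1], β ∈ (0,1). (i) For all x > 0 and y > 0, the inequality ηβ(1−β)Pxy/(N₀(ηβy + (1−β))) > (1−β)Px/((1−β)Py + N₀) holds if and only if y > √(N₀/(ηβP)). (ii) Consequently, if X and W are independent exponential random variables with means λ_SR > 0 and λ_RD > 0, then ℙ( ηβ(1−β)P·X·W/(N₀(ηβW + (1−β))) > (1−β)P·X/((1−β)P·W + N₀) ) = exp( −√(N₀/(ηβP)) / λ_RD ). -/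
/-!
Clearing the (positive) denominators, `γ_D - γ_R` has the sign of
`(1-β)²Px (ηβPy² - N₀)`, so for `x, y > 0` the secrecy rate is positive exactly when
`y > √(N₀/(ηβP))`. Both channel gains are almost surely positive, so the event is, up to a
null set, the tail event `{W > √(N₀/(ηβP))}` of an exponential variable.
-/

open MeasureTheory ProbabilityTheory Real

lemma destSNR_gt_relaySNR_iff {a c P N0 x y : ℝ} (ha : 0 < a) (hc : 0 < c) (hP : 0 < P)
    (hN0 : 0 < N0) (hx : 0 < x) (hy : 0 < y) :
    a * c * P * x * y / (N0 * (a * y + c)) > c * P * x / (c * P * y + N0) ↔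
      y > √(N0 / (a * P)) := by
  have gap : a * c * P * x * y * (c * P * y + N0) - c * P * x * (N0 * (a * y + c))
      = c ^ 2 * P * x * (a * P * y ^ 2 - N0) := by ring
  have hk : 0 < c ^ 2 * P * x := by positivity
  rw [gt_iff_lt, div_lt_div_iff₀ (by positivity) (by positivity), gt_iff_lt, sqrt_lt' hy,
    div_lt_iff₀ (by positivity)]
  constructor <;> intro h <;> nlinarith

lemma expMeasure_real_Ioi {r : ℝ} (hr : 0 < r) {s : ℝ} (hs : 0 ≤ s) :
    (expMeasure r).real (Set.Ioi s) = exp (-(r * s)) := by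
  have := isProbabilityMeasure_expMeasure hr
  rw [← Set.compl_Iic, probReal_compl_eq_one_sub measurableSet_Iic, ← cdf_eq_real,
    cdf_expMeasure_eq hr, if_pos hs, sub_sub_cancel]

section ExponentialLaw

variable {Ω : Type*} [MeasurableSpace Ω] {μ : Measure Ω} {X : Ω → ℝ} {r : ℝ}

lemma ae_pos_of_map_eq_expMeasure (hXm : Measurable X) (hX : μ.map X = expMeasure r)
    (hr : 0 < r) : ∀ᵐ ω ∂μ, 0 < X ω := by
  refine ae_of_ae_map hXm.aemeasurable ?_
  rw [hX, ae_iff]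
  simpa only [not_lt, Set.Iic_def] using expMeasure_Iic_zero hr

lemma measureReal_lt_of_map_eq_expMeasure (hXm : Measurable X) (hX : μ.map X = expMeasure r)
    (hr : 0 < r) {s : ℝ} (hs : 0 ≤ s) : μ.real {ω | s < X ω} = exp (-(r * s)) := by
  rw [← expMeasure_real_Ioi hr hs, ← hX, map_measureReal_apply hXm measurableSet_Ioi]
  rfl

end ExponentialLaw

theorem prob_positive_secrecy_PS_highSNR_general
    {Ω : Type*} [MeasurableSpace Ω] (μ : Measure Ω)
    (X W : Ω → ℝ) (hXm : Measurable X) (hWm : Measurable W)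
    (lamSR lamRD : ℝ) (hlamSR : 0 < lamSR) (hlamRD : 0 < lamRD)
    (hX : Measure.map X μ = expMeasure lamSR⁻¹)
    (hW : Measure.map W μ = expMeasure lamRD⁻¹)
    (P N0 η β : ℝ) (hP : 0 < P) (hN0 : 0 < N0)
    (hη0 : 0 < η) (hβ0 : 0 < β) (hβ1 : β < 1) :
    (∀ x y : ℝ, 0 < x → 0 < y →
      (η * β * (1 - β) * P * x * y / (N0 * (η * β * y + (1 - β))) >
        (1 - β) * P * x / ((1 - β) * P * y + N0) ↔ y > Real.sqrt (N0 / (η * β * P)))) ∧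
    (μ {ω | η * β * (1 - β) * P * X ω * W ω / (N0 * (η * β * W ω + (1 - β))) >
        (1 - β) * P * X ω / ((1 - β) * P * W ω + N0)}).toReal =
      Real.exp (-Real.sqrt (N0 / (η * β * P)) / lamRD) := by
  have hiff {x y : ℝ} (hx : 0 < x) (hy : 0 < y) :=
    destSNR_gt_relaySNR_iff (a := η * β) (c := 1 - β) (by positivity) (by linarith) hP hN0 hx hy
  refine ⟨fun x y hx hy ↦ hiff hx hy, ?_⟩
  have hevent : {ω | η * β * (1 - β) * P * X ω * W ω / (N0 * (η * β * W ω + (1 - β))) >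
      (1 - β) * P * X ω / ((1 - β) * P * W ω + N0)} =ᵐ[μ]
        {ω | √(N0 / (η * β * P)) < W ω} := by
    filter_upwards [ae_pos_of_map_eq_expMeasure hXm hX (inv_pos.2 hlamSR),
      ae_pos_of_map_eq_expMeasure hWm hW (inv_pos.2 hlamRD)] with ω hx hw
    exact propext (hiff hx hw)
  rw [← measureReal_def, measureReal_congr hevent,
    measureReal_lt_of_map_eq_expMeasure hWm hW (inv_pos.2 hlamRD) (sqrt_nonneg _)]
  congr 1
  field_simp

/-- **Probability of positive secrecy rate, PS policy, high-SNR approximation.**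
(i) For `x, y > 0`, the high-SNR `γ_D > γ_R` iff `y > √(N₀/(ηβP))`; (ii) consequently
`ℙ(γ_D > γ_R) = exp(-√(N₀/(ηβP))/λ_RD)`. -/
theorem prob_positive_secrecy_PS_highSNR
    {Ω : Type*} [MeasurableSpace Ω] (μ : Measure Ω) [IsProbabilityMeasure μ]
    (X W : Ω → ℝ) (hXm : Measurable X) (hWm : Measurable W)
    (hindep : IndepFun X W μ)
    (lamSR lamRD : ℝ) (hlamSR : 0 < lamSR) (hlamRD : 0 < lamRD)
    (hX : Measure.map X μ = expMeasure lamSR⁻¹)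
    (hW : Measure.map W μ = expMeasure lamRD⁻¹)
    (P N0 η β : ℝ) (hP : 0 < P) (hN0 : 0 < N0)
    (hη0 : 0 < η) (hη1 : η ≤ 1) (hβ0 : 0 < β) (hβ1 : β < 1) :
    (∀ x y : ℝ, 0 < x → 0 < y →
      (η * β * (1 - β) * P * x * y / (N0 * (η * β * y + (1 - β))) >
        (1 - β) * P * x / ((1 - β) * P * y + N0) ↔ y > Real.sqrt (N0 / (η * β * P)))) ∧
    (μ {ω | η * β * (1 - β) * P * X ω * W ω / (N0 * (η * β * W ω + (1 - β))) >
        (1 - β) * P * X ω / ((1 - β) * P * W ω + N0)}).toReal =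
      Real.exp (-Real.sqrt (N0 / (η * β * P)) / lamRD) :=
  prob_positive_secrecy_PS_highSNR_general μ X W hXm hWm lamSR lamRD hlamSR hlamRD hX hW P N0 η β hP
    hN0 hη0 hβ0 hβ1
end

section
/- Let P > 0, N₀ > 0, η ∈ (0,1], α ∈ (0,1), and δ > 1. Define ν(x) = 2ηαPx/(N₀(2ηαx + (1−α))) − Pδ/(Px + N₀) for x ≥ 0, and θ₁ = [ (δ−1) + √( (δ−1)² + 4δ·P(1−α)/(2ηαN₀) ) ] / (2P/N₀). Then θ₁ > 0, ν(θ₁) = 0, ν(x) < 0 for all 0 ≤ x < θ₁, and ν(x) ≥ 0 for all x ≥ θ₁. -/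
open Real

/-- **Sign pattern of `ν` for the TS policy.** With
`ν(x) = 2ηαPx/(N₀(2ηαx+(1-α))) - Pδ/(Px+N₀)` and `θ₁` as given, `θ₁ > 0`, `ν θ₁ = 0`,
`ν < 0` on `[0, θ₁)` and `ν ≥ 0` on `[θ₁, ∞)`. -/
theorem nu_sign_TS (P N0 η α δ : ℝ) (hP : 0 < P) (hN0 : 0 < N0)
    (hη0 : 0 < η) (hη1 : η ≤ 1) (hα0 : 0 < α) (hα1 : α < 1) (hδ : 1 < δ)
    (ν : ℝ → ℝ)
    (hν : ∀ x, ν x = 2 * η * α * P * x / (N0 * (2 * η * α * x + (1 - α)))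
        - P * δ / (P * x + N0))
    (θ1 : ℝ)
    (hθ1 : θ1 = ((δ - 1)
        + Real.sqrt ((δ - 1) ^ 2 + 4 * δ * (P * (1 - α) / (2 * η * α * N0)))) /
        (2 * (P / N0))) :
    0 < θ1 ∧ ν θ1 = 0 ∧ (∀ x, 0 ≤ x → x < θ1 → ν x < 0) ∧ (∀ x, θ1 ≤ x → 0 ≤ ν x) := by
  have hb : 0 < 1 - α := by linarith
  have ha : 0 < 2 * η * α := by positivity
  have hRextra : 0 < 4 * δ * (P * (1 - α) / (2 * η * α * N0)) := by positivity
  have hRpos : 0 ≤ (δ - 1) ^ 2 + 4 * δ * (P * (1 - α) / (2 * η * α * N0)) := by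
    nlinarith [sq_nonneg (δ - 1)]
  obtain ⟨s, hsdef, hs0, hs2⟩ : ∃ s : ℝ,
      Real.sqrt ((δ - 1) ^ 2 + 4 * δ * (P * (1 - α) / (2 * η * α * N0))) = s ∧ 0 ≤ s ∧
      s ^ 2 = (δ - 1) ^ 2 + 4 * δ * (P * (1 - α) / (2 * η * α * N0)) :=
    ⟨_, rfl, Real.sqrt_nonneg _, Real.sq_sqrt hRpos⟩
  rw [hsdef] at hθ1
  clear hsdef
  have hsg : δ - 1 < s := by nlinarith [hs2, hs0, hRextra]
  have ht : 2 * P * θ1 = N0 * ((δ - 1) + s) := by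
    rw [hθ1]; field_simp
  have hθpos : 0 < θ1 := by nlinarith
  have hs2'' : 2 * η * α * N0 ^ 2 * s ^ 2
      = 2 * η * α * N0 ^ 2 * (δ - 1) ^ 2 + 4 * δ * P * (1 - α) * N0 := by
    rw [hs2]; field_simp
  have hD1 : ∀ x : ℝ, 0 ≤ x → 0 < N0 * (2 * η * α * x + (1 - α)) := by
    intro x hx; have : 0 ≤ 2 * η * α * x := by positivity
    nlinarith
  have hD2 : ∀ x : ℝ, 0 ≤ x → 0 < P * x + N0 := by
    intro x hx; nlinarith
  -- part 3
  have h3 : ∀ x, 0 ≤ x → x < θ1 → ν x < 0 := by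
    intro x hx hxθ
    rw [hν, sub_neg]
    rw [div_lt_div_iff₀ (hD1 x hx) (hD2 x hx)]
    have h1 : 0 < N0 * ((δ - 1) + s) - 2 * P * x := by
      linarith [ht, mul_pos hP (sub_pos.mpr hxθ)]
    have h2 : 0 < 2 * P * x + N0 * (s - (δ - 1)) := by
      linarith [mul_nonneg hP.le hx, mul_pos hN0 (sub_pos.mpr hsg)]
    have hID : 4 * (P * δ * (N0 * (2 * η * α * x + (1 - α)))
        - 2 * η * α * P * x * (P * x + N0))
        = 2 * η * α * (N0 * ((δ - 1) + s) - 2 * P * x)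
          * (2 * P * x + N0 * (s - (δ - 1))) := by
      linear_combination (-1 : ℝ) * hs2''
    linarith [hID, mul_pos (mul_pos ha h1) h2]
  -- part 4
  have h4 : ∀ x, θ1 ≤ x → 0 ≤ ν x := by
    intro x hxθ
    have hx : 0 ≤ x := le_trans hθpos.le hxθ
    rw [hν, sub_nonneg]
    rw [div_le_div_iff₀ (hD2 x hx) (hD1 x hx)]
    have h1 : 0 ≤ 2 * P * x - N0 * ((δ - 1) + s) := by
      linarith [ht, mul_nonneg hP.le (sub_nonneg.mpr hxθ)]
    have h2 : 0 < 2 * P * x + N0 * (s - (δ - 1)) := by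
      linarith [mul_nonneg hP.le hx, mul_pos hN0 (sub_pos.mpr hsg)]
    have hID : 4 * (2 * η * α * P * x * (P * x + N0)
        - P * δ * (N0 * (2 * η * α * x + (1 - α))))
        = 2 * η * α * (2 * P * x - N0 * ((δ - 1) + s))
          * (2 * P * x + N0 * (s - (δ - 1))) := by
      linear_combination hs2''
    linarith [hID, mul_nonneg (mul_nonneg ha.le h1) h2.le]
  refine ⟨hθpos, ?_, h3, h4⟩
  have hEq : 2 * η * α * P * θ1 * (P * θ1 + N0)
      = P * δ * (N0 * (2 * η * α * θ1 + (1 - α))) := by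
    linear_combination ((2 * η * α) / 4 * (2 * P * θ1 - N0 * (δ - 1) + N0 * s)) * ht
      + (1 / 4) * hs2''
  rw [hν, sub_eq_zero, div_eq_div_iff (hD1 θ1 hθpos.le).ne' (hD2 θ1 hθpos.le).ne']
  linear_combination hEq
end
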